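/- arXiv:2301.08366 — 3 statements merged into one kernel-verified Lean document; each statement's English description precedes it below -/
import Mathlib

section
/- Let F_i be defined by F_0 = 1, F_1 = z, z·F_i = (i+1)·F_{i+1} + (d−i+1)·F_{i−1} for 1 ≤ i ≤ d, and let Φ_d(z) = ∏_{i=0}^{d}(z − (d−2i)). Then Φ_d = (d+1)!·F_{d+1}. -/
open Finset Polynomial

noncomputable def Gp (a b : ℕ) : Polynomial ℂ := (1+X)^a * (1-X)^b

lemma derivGp (a b : ℕ) : (1-X) * (1+X) * derivative (Gp a b) =
    (C ((a:ℂ) - b) - C ((a:ℂ)+b) * X) * Gp a b := by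
  induction a with
  | zero =>
    induction b with
    | zero => simp [Gp]
    | succ b ih =>
        have h : Gp 0 (b+1) = (1-X) * Gp 0 b := by
          simp [Gp, pow_succ]; ring
        rw [h, derivative_mul]
        have : (1-X:Polynomial ℂ) * (1+X) * ((derivative (1-X)) * Gp 0 b + (1-X) * derivative (Gp 0 b))
            = (1-X) * (1+X) * (derivative (1-X)) * Gp 0 b + (1-X) * ((1-X)*(1+X) * derivative (Gp 0 b)) := by ring
        rw [this, ih]
        simp only [derivative_sub, derivative_one, derivative_X]
        push_cast
        simp only [map_add, map_sub, map_mul, map_one, map_neg, map_ofNat, C_1]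
        ring
  | succ a ih =>
      have h : Gp (a+1) b = (1+X) * Gp a b := by
        simp [Gp, pow_succ]; ring
      rw [h, derivative_mul]
      have : (1-X:Polynomial ℂ) * (1+X) * ((derivative (1+X)) * Gp a b + (1+X) * derivative (Gp a b))
          = (1-X) * (1+X) * (derivative (1+X)) * Gp a b + (1+X) * ((1-X)*(1+X) * derivative (Gp a b)) := by ring
      rw [this, ih]
      simp only [derivative_add, derivative_one, derivative_X]
      push_cast
      simp only [map_add, map_sub, map_mul, map_one, map_neg, map_ofNat, C_1]
      ring

lemma Gp_coeff_zero (a b : ℕ) : (Gp a b).coeff 0 = 1 := by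
  simp [Gp, coeff_zero_eq_eval_zero]

lemma Gp_id2 (a b : ℕ) : derivative (Gp a b) - derivative (Gp a b) * X^2 =
    C ((a:ℂ)-b) * Gp a b - C ((a:ℂ)+b) * (X * Gp a b) := by
  linear_combination derivGp a b

lemma Gp_hc (a b n : ℕ) : coeff (derivative (Gp a b)) n - coeff (derivative (Gp a b) * X^2) n
    = ((a:ℂ)-b) * coeff (Gp a b) n - ((a:ℂ)+b) * coeff (X * Gp a b) n := by
  have := congrArg (fun q => coeff q n) (Gp_id2 a b)
  simpa only [coeff_sub, coeff_C_mul] using this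

lemma Gp_coeff_one (a b : ℕ) : (Gp a b).coeff 1 = (a:ℂ) - b := by
  have h := Gp_hc a b 0
  simpa [coeff_derivative, coeff_mul_X_pow', Gp_coeff_zero] using h

lemma Gp_rec (a b i : ℕ) (hi : 1 ≤ i) :
    ((a:ℂ) - b) * (Gp a b).coeff i =
      ((i:ℂ)+1) * (Gp a b).coeff (i+1) + (((a:ℂ)+b) - i + 1) * (Gp a b).coeff (i-1) := by
  have h := Gp_hc a b i
  match i, hi with
  | 1, _ =>
      simp [coeff_derivative, coeff_mul_X_pow', coeff_X_mul, Gp_coeff_zero] at h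
      rw [Gp_coeff_zero]
      push_cast
      linear_combination -h
  | (k+2), _ =>
      rw [coeff_mul_X_pow'] at h
      simp only [if_pos (by omega : 2 ≤ k+2), coeff_derivative] at h
      have e1 : k + 2 - 2 = k := by omega
      have e2 : k + 2 - 1 = k + 1 := by omega
      rw [e1] at h
      rw [e2]
      rw [coeff_X_mul] at h
      push_cast at h ⊢
      linear_combination -h

lemma Gp_natDegree_le (a b : ℕ) : (Gp a b).natDegree ≤ a + b := by
  have h1 : ((1:Polynomial ℂ)+X).natDegree ≤ 1 := by
    have : ((1:Polynomial ℂ)+X) = X + C 1 := by rw [C_1]; ring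
    rw [this, natDegree_X_add_C]
  have h2 : ((1:Polynomial ℂ)-X).natDegree ≤ 1 := by
    have : ((1:Polynomial ℂ)-X) = -(X - C 1) := by rw [C_1]; ring
    rw [this, natDegree_neg, natDegree_X_sub_C]
  refine natDegree_mul_le.trans (add_le_add ?_ ?_)
  · exact natDegree_pow_le.trans (by nlinarith)
  · exact natDegree_pow_le.trans (by nlinarith)

lemma Gp_coeff_top (a b : ℕ) : (Gp a b).coeff (a+b+1) = 0 :=
  coeff_eq_zero_of_natDegree_lt (lt_of_le_of_lt (Gp_natDegree_le a b) (by omega))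

lemma evalF (a b : ℕ) (F : ℕ → Polynomial ℂ) (hF0 : F 0 = 1) (hF1 : F 1 = X)
    (hrec : ∀ i, 1 ≤ i → i ≤ a+b →
      X * F i = ((i:ℂ)+1) • F (i+1) + (((a:ℂ)+(b:ℂ)) - i + 1) • F (i-1)) :
    ∀ n, n ≤ a + b → (F n).eval ((a:ℂ)-b) = (Gp a b).coeff n ∧
      (F (n+1)).eval ((a:ℂ)-b) = (Gp a b).coeff (n+1) := by
  intro n
  induction n with
  | zero =>
      intro _
      constructor
      · simp [hF0, Gp_coeff_zero]
      · simp [hF1, Gp_coeff_one]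
  | succ n ih =>
      intro hn
      obtain ⟨e0, e1⟩ := ih (by omega)
      refine ⟨e1, ?_⟩
      have hr := hrec (n+1) (by omega) hn
      have hr' := congrArg (Polynomial.eval ((a:ℂ)-b)) hr
      simp only [eval_mul, eval_X, eval_add, eval_smul, smul_eq_mul,
        Nat.add_sub_cancel, e0, e1] at hr'
      have hg := Gp_rec a b (n+1) (by omega)
      simp only [Nat.add_sub_cancel] at hg
      have h2 : ((n:ℂ)+2) * ((F (n+2)).eval ((a:ℂ)-b) - (Gp a b).coeff (n+2)) = 0 := by
        push_cast at hr' hg ⊢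
        linear_combination hg - hr'
      rcases mul_eq_zero.mp h2 with h | h
      · exfalso
        have : ((n:ℂ)+2) ≠ 0 := by
          exact_mod_cast (Nat.cast_add_one_ne_zero (n+1) : ((n+1:ℕ):ℂ)+1 ≠ 0)
        exact this h
      · exact sub_eq_zero.mp h

lemma monicF (d : ℕ) (F : ℕ → Polynomial ℂ) (hF0 : F 0 = 1) (hF1 : F 1 = X)
    (hrec : ∀ i, 1 ≤ i → i ≤ d →
      X * F i = ((i:ℂ)+1) • F (i+1) + ((d:ℂ) - i + 1) • F (i-1)) :
    ∀ n, n ≤ d →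
      (((n.factorial:ℂ)) • F n).Monic ∧ (((n.factorial:ℂ)) • F n).natDegree = n ∧
      ((((n+1).factorial:ℂ)) • F (n+1)).Monic ∧ ((((n+1).factorial:ℂ)) • F (n+1)).natDegree = n+1 := by
  intro n
  induction n with
  | zero =>
      intro _
      refine ⟨?_, ?_, ?_, ?_⟩ <;> simp [hF0, hF1, Nat.factorial, monic_one, monic_X]
  | succ n ih =>
      intro hn
      obtain ⟨m0, d0, m1, d1⟩ := ih (by omega)
      have hr := hrec (n+1) (by omega) hn
      have key : (((n+2).factorial:ℂ)) • F (n+2) =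
          X * (((n+1).factorial:ℂ) • F (n+1)) +
          (-(((n+1).factorial:ℂ) * ((d:ℂ) - (n+1) + 1))) • F n := by
        have hfac : (((n+2).factorial:ℂ)) = ((n+1).factorial:ℂ) * ((n:ℂ)+2) := by
          rw [Nat.factorial_succ]; push_cast; ring
        simp only [smul_eq_C_mul, Nat.add_sub_cancel] at hr ⊢
        rw [hfac]
        push_cast at hr ⊢
        simp only [map_add, map_sub, map_mul, map_one, map_neg, map_ofNat, C_1] at hr ⊢
        linear_combination (-(C (((n+1).factorial:ℂ)))) * hr
      have hfne : (((n).factorial:ℂ)) ≠ 0 := by exact_mod_cast Nat.factorial_ne_zero n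
      have hFn_deg : (F n).degree ≤ (n:ℕ) := by
        have h1 : ((n.factorial:ℂ) • F n).degree = (n : ℕ) := by
          rw [degree_eq_natDegree m0.ne_zero, d0]
        have h2 : F n = ((n.factorial:ℂ))⁻¹ • ((n.factorial:ℂ) • F n) := by
          rw [smul_smul, inv_mul_cancel₀ hfne, one_smul]
        rw [h2]
        exact (degree_smul_le _ _).trans (le_of_eq h1)
      have hXm : (X * (((n+1).factorial:ℂ) • F (n+1))).Monic := monic_X.mul m1
      have hXd : (X * (((n+1).factorial:ℂ) • F (n+1))).natDegree = n+2 := by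
        rw [monic_X.natDegree_mul m1, natDegree_X, d1]
        omega
      have hlow : ((-(((n+1).factorial:ℂ) * ((d:ℂ) - (n+1) + 1))) • F n).degree <
          (X * (((n+1).factorial:ℂ) • F (n+1))).degree := by
        rw [degree_eq_natDegree hXm.ne_zero, hXd]
        refine lt_of_le_of_lt ((degree_smul_le _ _).trans hFn_deg) ?_
        exact_mod_cast Nat.lt_succ_of_lt (Nat.lt_succ_self n)
      have hsum : ((((n+2).factorial:ℂ)) • F (n+2)).Monic := by
        rw [key]; exact hXm.add_of_left hlow
      have hdeg : ((((n+2).factorial:ℂ)) • F (n+2)).degree = ((n+2 : ℕ) : WithBot ℕ) := by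
        rw [key, degree_add_eq_left_of_degree_lt hlow, degree_eq_natDegree hXm.ne_zero, hXd]
      exact ⟨m1, d1, hsum, natDegree_eq_of_degree_eq_some hdeg⟩

theorem stmt8 (d : ℕ) (hd : 1 ≤ d) (F : ℕ → Polynomial ℂ)
    (hF0 : F 0 = 1) (hF1 : F 1 = Polynomial.X)
    (hrec : ∀ i, 1 ≤ i → i ≤ d →
      Polynomial.X * F i = ((i : ℂ) + 1) • F (i + 1) + ((d : ℂ) - (i : ℂ) + 1) • F (i - 1)) :
    ∏ i ∈ Finset.range (d + 1), (Polynomial.X - Polynomial.C ((d : ℂ) - 2 * (i : ℂ))) =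
      ((Nat.factorial (d + 1) : ℂ)) • F (d + 1) := by
  classical
  set P : Polynomial ℂ := ∏ i ∈ Finset.range (d + 1), (X - C ((d : ℂ) - 2 * (i : ℂ))) with hP
  set Q : Polynomial ℂ := ((Nat.factorial (d + 1) : ℂ)) • F (d + 1) with hQ
  have hPm : P.Monic := monic_prod_of_monic _ _ (fun i _ => monic_X_sub_C _)
  have hPd : P.natDegree = d + 1 := by
    rw [hP, natDegree_prod_of_monic _ _ (fun i _ => monic_X_sub_C _)]
    simp only [natDegree_X_sub_C, Finset.sum_const, smul_eq_mul, Finset.card_range, mul_one]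
  obtain ⟨-, -, hQm, hQd⟩ := monicF d F hF0 hF1 hrec d le_rfl
  -- roots of F (d+1)
  have hroot : ∀ m : ℕ, m ≤ d → (F (d+1)).eval ((d:ℂ) - 2*m) = 0 := by
    intro m hm
    have hab : (d - m) + m = d := by omega
    have hcast : (((d-m:ℕ)):ℂ) - (m:ℂ) = (d:ℂ) - 2*m := by
      rw [Nat.cast_sub hm]; ring
    have hrec' : ∀ i, 1 ≤ i → i ≤ (d-m)+m →
        X * F i = ((i:ℂ)+1) • F (i+1) + (((((d-m:ℕ)):ℂ)+(m:ℂ)) - i + 1) • F (i-1) := by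
      intro i h1 h2
      have hc2 : (((d-m:ℕ)):ℂ) + (m:ℂ) = (d:ℂ) := by
        rw [← Nat.cast_add, hab]
      rw [hc2]
      exact hrec i h1 (by omega)
    have := (evalF (d-m) m F hF0 hF1 hrec' ((d-m)+m) le_rfl).2
    rw [Gp_coeff_top, hcast, hab] at this
    exact this
  -- show P - Q = 0
  by_cases hPQ : P - Q = 0
  · exact sub_eq_zero.mp hPQ
  exfalso
  have hdegP : P.degree = ((d+1 : ℕ) : WithBot ℕ) := by
    rw [degree_eq_natDegree hPm.ne_zero, hPd]
  have hdegQ : Q.degree = ((d+1 : ℕ) : WithBot ℕ) := by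
    rw [degree_eq_natDegree hQm.ne_zero, hQd]
  have hsub : (P - Q).degree < ((d+1 : ℕ) : WithBot ℕ) := by
    have := degree_sub_lt (hdegP.trans hdegQ.symm) hPm.ne_zero
      (by rw [hPm.leadingCoeff, hQm.leadingCoeff])
    rwa [hdegP] at this
  have hndeg : (P - Q).natDegree < d + 1 :=
    (natDegree_lt_iff_degree_lt hPQ).mpr hsub
  have heval : ∀ m : Fin (d+1), (P - Q).eval ((d:ℂ) - 2*(m:ℕ)) = 0 := by
    intro m
    have hm : (m:ℕ) ≤ d := by omega
    rw [eval_sub]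
    have hPe : P.eval ((d:ℂ) - 2*(m:ℕ)) = 0 := by
      rw [hP, eval_prod]
      refine Finset.prod_eq_zero (Finset.mem_range.mpr m.isLt) ?_
      simp
    have hQe : Q.eval ((d:ℂ) - 2*(m:ℕ)) = 0 := by
      rw [hQ, eval_smul, smul_eq_mul, hroot (m:ℕ) hm, mul_zero]
    rw [hPe, hQe, sub_zero]
  have hinj : Function.Injective (fun m : Fin (d+1) => (d:ℂ) - 2*(m:ℕ)) := by
    intro x y h
    simp only at h
    have hxy : ((x:ℕ):ℂ) = ((y:ℕ):ℂ) := by linear_combination (-1/2 : ℂ) * h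
    have := Nat.cast_injective (R := ℂ) hxy
    exact Fin.ext this
  have := Polynomial.eq_zero_of_natDegree_lt_card_of_eval_eq_zero (P - Q) hinj heval
    (by simpa using hndeg)
  exact hPQ this
end

section
/- Let P_d be the set of triples (h,i,j), 0 ≤ h,i,j ≤ d, satisfying the triangle inequality, h+i+j ≤ 2d, and h+i+j even. Suppose d ≥ 2 and (h,i,j) with 0 ≤ h,i,j ≤ d−2 is not in P_{d−2}. Then either (h+1, i−2r, j+1) ∉ P_d for all 0 ≤ r ≤ ⌊i/2⌋, or (h+1, i+2r, j+1) ∉ P_d for all 1 ≤ r ≤ ⌊(d−i)/2⌋. -/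
/-- Membership of an integer triple `(h, i, j)` in the set `P_d`:
`0 ≤ h, i, j ≤ d`, the triangle inequality holds, `h + i + j ≤ 2d`, and `h + i + j` is even. -/
def memP (d h i j : ℤ) : Prop :=
  0 ≤ h ∧ h ≤ d ∧ 0 ≤ i ∧ i ≤ d ∧ 0 ≤ j ∧ j ≤ d ∧
    h ≤ i + j ∧ i ≤ h + j ∧ j ≤ h + i ∧ h + i + j ≤ 2 * d ∧ Even (h + i + j)

theorem stmt11 (d h i j : ℤ) (hd : 2 ≤ d)
    (h0 : 0 ≤ h) (hhd : h ≤ d - 2) (i0 : 0 ≤ i) (hid : i ≤ d - 2) (j0 : 0 ≤ j) (hjd : j ≤ d - 2)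
    (hnot : ¬ memP (d - 2) h i j) :
    (∀ r : ℤ, 0 ≤ r → r ≤ i / 2 → ¬ memP d (h + 1) (i - 2 * r) (j + 1)) ∨
    (∀ r : ℤ, 1 ≤ r → r ≤ (d - i) / 2 → ¬ memP d (h + 1) (i + 2 * r) (j + 1)) := by
  simp only [memP, Int.even_iff] at hnot ⊢
  by_cases hc : ¬ (h + i + j) % 2 = 0 ∨ i + j < h ∨ h + i < j
  · left; intro r hr0 hr1; omega
  · right; intro r hr0 hr1; omega
end

section
/- In the generalized Terwilliger algebra T_d of the hypercube Q_d (d ≥ 0), the primary central idempotent u_0 = 2^d ∑_{i=0}^{d} k_i^{−1} e_i* e_0 e_i* satisfies u_0 e_0 = e_0, u_0 e_d = e_d, u_0 e_0* = e_0*, and u_0 e_d* = e_d*. -/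
open Finset Polynomial

/-- The condition for `(h, i, j)` (with `0 ≤ h, i, j ≤ d` understood) to lie in `P_d`:
the triangle inequality, `h + i + j ≤ 2d`, and `h + i + j` even. -/
def memPn (d h i j : ℕ) : Prop :=
  h ≤ i + j ∧ i ≤ h + j ∧ j ≤ h + i ∧ h + i + j ≤ 2 * d ∧ Even (h + i + j)

/-- `x_1 = ∑_i (d - 2i) • e_i`. -/
noncomputable def xone {A : Type*} [Ring A] [Algebra ℂ A] (d : ℕ) (e : ℕ → A) : A :=
  ∑ t ∈ Finset.range (d + 1), ((d : ℂ) - 2 * (t : ℂ)) • e t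

namespace Stmt17A

noncomputable def KP (d t : ℕ) : Polynomial ℂ := (1 - X) ^ t * (1 + X) ^ (d - t)

noncomputable def Kr (d i t : ℕ) : ℂ := (KP d t).coeff i

lemma coeff_one_sub_X_pow (n k : ℕ) :
    ((1 - X : Polynomial ℂ) ^ n).coeff k = (-1) ^ k * n.choose k := by
  have h : (1 - X : Polynomial ℂ) = C (-1) * (X + C (-1)) := by
    simp [mul_add]; ring
  rw [h, mul_pow, ← C_pow, coeff_C_mul, coeff_X_add_C_pow]
  rcases le_or_gt k n with hk | hk
  · have : (-1 : ℂ) ^ n = (-1) ^ (n - k) * (-1) ^ k := by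
      rw [← pow_add]; congr 1; omega
    rw [this]; ring_nf
    rw [mul_comm (n-k) 2, pow_mul]; norm_num
  · simp [Nat.choose_eq_zero_of_lt hk]

lemma natDegree_KP_le (d t : ℕ) (ht : t ≤ d) : (KP d t).natDegree ≤ d := by
  apply le_trans (natDegree_mul_le)
  have h1 : ((1 - X : Polynomial ℂ) ^ t).natDegree ≤ t := by
    apply le_trans (natDegree_pow_le)
    have : (1 - X : Polynomial ℂ).natDegree ≤ 1 :=
      le_trans (natDegree_sub_le _ _) (by simp)
    nlinarith
  have h2 : ((1 + X : Polynomial ℂ) ^ (d - t)).natDegree ≤ d - t := by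
    apply le_trans (natDegree_pow_le)
    have : (1 + X : Polynomial ℂ).natDegree ≤ 1 :=
      le_trans (natDegree_add_le _ _) (by simp)
    nlinarith
  omega

lemma Kr_zero_right (d i : ℕ) : Kr d i 0 = (d.choose i : ℂ) := by
  simp [Kr, KP, coeff_one_add_X_pow]

lemma Kr_d_right (d i : ℕ) : Kr d i d = (-1) ^ i * (d.choose i : ℂ) := by
  simp [Kr, KP, coeff_one_sub_X_pow]

lemma Kr_d_left (d t : ℕ) (ht : t ≤ d) : Kr d d t = (-1) ^ t := by
  rw [Kr, KP, coeff_mul]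
  rw [Finset.sum_eq_single_of_mem (t, d - t)]
  · rw [coeff_one_sub_X_pow, coeff_one_add_X_pow]; simp
  · simp [Finset.HasAntidiagonal.mem_antidiagonal]; omega
  · rintro ⟨a, b⟩ hab hne
    simp only [Finset.HasAntidiagonal.mem_antidiagonal] at hab
    rcases lt_or_ge a t with h | h
    · have hb : d - t < b := by omega
      rw [coeff_one_add_X_pow, Nat.choose_eq_zero_of_lt hb]; simp
    · have ha : t < a := by
        rcases lt_or_ge t a with h' | h'
        · exact h'
        · exfalso; apply hne; have : a = t := le_antisymm h' h; subst this; simp; omega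
      rw [coeff_one_sub_X_pow, Nat.choose_eq_zero_of_lt ha]; simp

lemma sum_Kr (d t : ℕ) (ht : t ≤ d) :
    ∑ i ∈ Finset.range (d + 1), Kr d i t = if t = 0 then (2 : ℂ) ^ d else 0 := by
  have h1 : ∑ i ∈ Finset.range (d + 1), Kr d i t
      = (KP d t).eval 1 := by
    rw [eval_eq_sum_range' (lt_of_le_of_lt (natDegree_KP_le d t ht) (Nat.lt_succ_self d)) 1]
    simp [Kr]
  rw [h1, KP]
  rcases Nat.eq_zero_or_pos t with h | h
  · subst h; norm_num
  · simp [eval_pow]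
    rw [zero_pow (by omega)]
    simp [if_neg (by omega : ¬ t = 0)]

lemma DIlem (d t : ℕ) (ht : t ≤ d) :
    (1 - X^2) * derivative (KP d t)
      = (C ((d:ℂ) - 2*t) - C (d:ℂ) * X) * KP d t := by
  have hA : ∀ n : ℕ, (1 - X : Polynomial ℂ) * (C (n:ℂ) * (1-X)^(n-1)) = C (n:ℂ) * (1-X)^n := by
    intro n; cases n with
    | zero => simp
    | succ n => simp only [Nat.add_sub_cancel]; ring
  have hB : ∀ n : ℕ, (1 + X : Polynomial ℂ) * (C (n:ℂ) * (1+X)^(n-1)) = C (n:ℂ) * (1+X)^n := by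
    intro n; cases n with
    | zero => simp
    | succ n => simp only [Nat.add_sub_cancel]; ring
  have hu : derivative (1 - X : Polynomial ℂ) = -1 := by simp
  have hv : derivative (1 + X : Polynomial ℂ) = 1 := by simp
  rw [KP, derivative_mul, derivative_pow, derivative_pow, hu, hv]
  have hsub : (C (((d - t : ℕ)) : ℂ)) = C (d:ℂ) - C (t:ℂ) := by
    rw [← C_sub]; congr 1; push_cast [Nat.cast_sub ht]; ring
  have hC2 : C ((d:ℂ) - 2*(t:ℂ)) = C (d:ℂ) - 2 * C (t:ℂ) := by
    rw [map_sub, map_mul, map_ofNat]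
  calc (1 - X^2) * (C (t:ℂ) * (1-X)^(t-1) * (-1) * (1+X)^(d-t)
        + (1-X)^t * (C (((d-t:ℕ)):ℂ) * (1+X)^(d-t-1) * 1))
      = ((1-X) * (C (t:ℂ) * (1-X)^(t-1))) * ((-1) * ((1+X)^(d-t) * (1+X)))
        + ((1+X) * (C (((d-t:ℕ)):ℂ) * (1+X)^(d-t-1))) * ((1-X) * (1-X)^t) := by ring
    _ = (C (t:ℂ) * (1-X)^t) * ((-1) * ((1+X)^(d-t) * (1+X)))
        + (C (((d-t:ℕ)):ℂ) * (1+X)^(d-t)) * ((1-X) * (1-X)^t) := by rw [hA, hB]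
    _ = (C ((d:ℂ) - 2*t) - C (d:ℂ) * X) * ((1-X)^t * (1+X)^(d-t)) := by
        rw [hsub, hC2]; ring


lemma KrRec (d t i : ℕ) (ht : t ≤ d) (hi : 1 ≤ i) :
    ((d:ℂ) - 2*t) * Kr d i t
      = ((i:ℂ)+1) * Kr d (i+1) t + ((d:ℂ) - i + 1) * Kr d (i-1) t := by
  have h := congrArg (fun p => Polynomial.coeff p i) (DIlem d t ht)
  have hL : ((1 - X^2) * derivative (KP d t)).coeff i
      = Kr d (i+1) t * ((i:ℂ)+1) - Kr d (i-1) t * ((i:ℂ) - 1) := by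
    have e : ((1:Polynomial ℂ) - X^2) * derivative (KP d t)
        = derivative (KP d t) - derivative (KP d t) * X^2 := by ring
    rw [e, coeff_sub, coeff_derivative, coeff_mul_X_pow']
    rcases eq_or_lt_of_le hi with h1 | h2
    · rw [← h1]; norm_num [Kr]
    · have h2' : 2 ≤ i := h2
      rw [if_pos h2', coeff_derivative]
      have e2 : i - 2 + 1 = i - 1 := by omega
      rw [e2]
      have e3 : ((i - 2 : ℕ) : ℂ) + 1 = (i:ℂ) - 1 := by
        push_cast [Nat.cast_sub h2']; ring
      rw [e3]; unfold Kr; push_cast; ring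
  have hXK : (X * KP d t).coeff i = (KP d t).coeff (i-1) := by
    have hi' : i = (i-1) + 1 := by omega
    conv_lhs => rw [hi']
    rw [coeff_X_mul]
  have hR : ((C ((d:ℂ) - 2*(t:ℂ)) - C (d:ℂ) * X) * KP d t).coeff i
      = ((d:ℂ) - 2*t) * Kr d i t - (d:ℂ) * Kr d (i-1) t := by
    have e : (C ((d:ℂ)-2*(t:ℂ)) - C (d:ℂ) * X) * KP d t
        = C ((d:ℂ)-2*(t:ℂ)) * KP d t - C (d:ℂ) * (X * KP d t) := by ring
    rw [e, coeff_sub, coeff_C_mul, coeff_C_mul, hXK]; rfl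
  rw [hL, hR] at h
  linear_combination -h

lemma PI (d t : ℕ) (ht : t ≤ d) :
    ∑ j ∈ Finset.range (d+1), C (Kr d j t) * KP d j = C ((2:ℂ)^d) * X^t := by
  refine eq_of_infinite_eval_eq _ _
    (((Set.finite_singleton (-1:ℂ)).infinite_compl).mono ?_)
  intro y hy
  simp only [Set.mem_compl_iff, Set.mem_singleton_iff] at hy
  simp only [Set.mem_setOf_eq]
  have hv : (1 + y : ℂ) ≠ 0 := by
    intro h; apply hy; linear_combination h
  set w : ℂ := (1 - y)/(1 + y) with hw
  have hKP : ∀ s ≤ d, eval y (KP d s) = (1-y)^s * (1+y)^(d-s) := by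
    intro s hs; simp [KP, eval_pow]
  have step1 : ∀ j, j ≤ d → (1-y)^j * (1+y)^(d-j) = w^j * (1+y)^d := by
    intro j hj
    rw [hw, div_pow]
    rw [div_mul_eq_mul_div, eq_div_iff (pow_ne_zero _ hv)]
    rw [mul_assoc, ← pow_add]
    congr 2
    omega
  have step2 : ∑ j ∈ Finset.range (d+1), Kr d j t * w^j = eval w (KP d t) := by
    rw [eval_eq_sum_range' (lt_of_le_of_lt (natDegree_KP_le d t ht) (Nat.lt_succ_self d)) w]
    rfl
  have h1w : (1:ℂ) - w = 2*y/(1+y) := by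
    rw [hw]; field_simp; ring
  have h2w : (1:ℂ) + w = 2/(1+y) := by
    rw [hw]; field_simp; ring
  have step3 : eval w (KP d t) = (2*y/(1+y))^t * (2/(1+y))^(d-t) := by
    simp [KP, eval_pow, ← h1w, ← h2w]
  calc eval y (∑ j ∈ Finset.range (d+1), C (Kr d j t) * KP d j)
      = ∑ j ∈ Finset.range (d+1), Kr d j t * ((1-y)^j * (1+y)^(d-j)) := by
        rw [eval_finset_sum]
        refine Finset.sum_congr rfl fun j hj => ?_
        rw [eval_mul, eval_C, hKP j (by simpa using Nat.lt_succ_iff.mp (Finset.mem_range.mp hj))]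
    _ = ∑ j ∈ Finset.range (d+1), Kr d j t * (w^j * (1+y)^d) := by
        refine Finset.sum_congr rfl fun j hj => ?_
        rw [step1 j (Nat.lt_succ_iff.mp (Finset.mem_range.mp hj))]
    _ = (∑ j ∈ Finset.range (d+1), Kr d j t * w^j) * (1+y)^d := by
        rw [Finset.sum_mul]; exact Finset.sum_congr rfl fun j _ => by ring
    _ = ((2*y/(1+y))^t * (2/(1+y))^(d-t)) * (1+y)^d := by rw [step2, step3]
    _ = (2:ℂ)^d * y^t := by
        rw [div_pow, div_pow, mul_pow]
        have e1 : (1+y)^d = (1+y)^t * (1+y)^(d-t) := by rw [← pow_add]; congr 1; omega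
        have e2 : (2:ℂ)^d = 2^t * 2^(d-t) := by rw [← pow_add]; congr 1; omega
        rw [e1, e2]
        field_simp
    _ = eval y (C ((2:ℂ)^d) * X^t) := by simp

lemma sum_Kr_mul_Kr (d i t : ℕ) (hi : i ≤ d) (ht : t ≤ d) :
    ∑ j ∈ Finset.range (d+1), Kr d i j * Kr d j t = if i = t then (2:ℂ)^d else 0 := by
  have h := congrArg (fun p => Polynomial.coeff p i) (PI d t ht)
  simp only [finset_sum_coeff, coeff_C_mul, coeff_X_pow] at h
  calc ∑ j ∈ Finset.range (d+1), Kr d i j * Kr d j t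
      = ∑ j ∈ Finset.range (d+1), Kr d j t * (KP d j).coeff i := by
        exact Finset.sum_congr rfl fun j _ => by rw [Kr]; ring
    _ = (2:ℂ)^d * (if i = t then 1 else 0) := by
        rw [h]
    _ = if i = t then (2:ℂ)^d else 0 := by split <;> simp

lemma Kr_one (d t : ℕ) (ht : t ≤ d) : Kr d 1 t = (d:ℂ) - 2*t := by
  rw [Kr, KP, coeff_mul, Finset.Nat.sum_antidiagonal_eq_sum_range_succ_mk]
  rw [Finset.sum_range_succ, Finset.sum_range_one]
  simp [coeff_one_sub_X_pow, coeff_one_add_X_pow]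
  push_cast [Nat.cast_sub ht]; ring

lemma evalF (d : ℕ) (F : ℕ → Polynomial ℂ) (hF0 : F 0 = 1) (hF1 : F 1 = X)
    (hrec : ∀ i, 1 ≤ i → i ≤ d →
      X * F i = ((i : ℂ) + 1) • F (i + 1) + ((d : ℂ) - (i : ℂ) + 1) • F (i - 1)) :
    ∀ i, i ≤ d → ∀ t, t ≤ d → (F i).eval ((d:ℂ) - 2*t) = Kr d i t := by
  intro i
  induction i using Nat.strong_induction_on with
  | _ i ih =>
    match i with
    | 0 =>
      intro _ t ht
      simp [hF0, Kr, KP, coeff_zero_eq_eval_zero]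
    | 1 =>
      intro _ t ht
      rw [hF1, eval_X, Kr_one d t ht]
    | (k+2) =>
      intro hid t htd
      have e1 := ih (k+1) (by omega) (by omega) t htd
      have e0 := ih k (by omega) (by omega) t htd
      have hr := hrec (k+1) (by omega) (by omega)
      have hev := congrArg (eval ((d:ℂ) - 2*(t:ℂ))) hr
      simp only [eval_mul, eval_X, eval_add, eval_smul, smul_eq_mul,
        Nat.succ_sub_one] at hev
      rw [e1, e0] at hev
      have hKr := KrRec d t (k+1) htd (by omega)
      simp only [Nat.succ_sub_one] at hKr
      have hc : ((k+1:ℕ):ℂ) + 1 ≠ 0 := by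
        have : ((k+1:ℕ):ℂ) + 1 = ((k+2:ℕ):ℂ) := by push_cast; ring
        rw [this]
        exact Nat.cast_ne_zero.mpr (by omega)
      have eF : eval ((d:ℂ) - 2*(t:ℂ)) (F (k+1+1)) = eval ((d:ℂ) - 2*(t:ℂ)) (F (k+2)) := rfl
      have eK : Kr d (k+1+1) t = Kr d (k+2) t := rfl
      rw [eF] at hev
      rw [eK] at hKr
      apply mul_left_cancel₀ hc
      linear_combination hKr - hev

end Stmt17A

namespace Stmt17B

variable {A : Type*} [Ring A] [Algebra ℂ A]

lemma idem (d : ℕ) (f : ℕ → A)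
    (hsumf : ∑ i ∈ Finset.range (d + 1), f i = 1)
    (horth : ∀ s ∈ Finset.range (d + 1), ∀ t ∈ Finset.range (d + 1), s ≠ t → f s * f t = 0) :
    ∀ s ∈ Finset.range (d + 1), f s * f s = f s := by
  intro s hs
  have h1 : f s * (∑ t ∈ Finset.range (d + 1), f t) = f s := by rw [hsumf, mul_one]
  rw [Finset.mul_sum, Finset.sum_eq_single_of_mem s hs
    (fun t ht hne => horth s hs t ht (fun h => hne h.symm))] at h1
  exact h1

lemma spectral (d : ℕ) (f : ℕ → A)
    (hsumf : ∑ i ∈ Finset.range (d + 1), f i = 1)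
    (horth : ∀ s ∈ Finset.range (d + 1), ∀ t ∈ Finset.range (d + 1), s ≠ t → f s * f t = 0)
    (P : Polynomial ℂ) :
    Polynomial.aeval (xone d f) P
      = ∑ t ∈ Finset.range (d + 1), (P.eval ((d:ℂ) - 2*(t:ℂ))) • f t := by
  have hidem := idem d f hsumf horth
  have hpow : ∀ n : ℕ, (xone d f)^n
      = ∑ t ∈ Finset.range (d + 1), (((d:ℂ) - 2*(t:ℂ))^n) • f t := by
    intro n
    induction n with
    | zero => simpa using hsumf.symm
    | succ n ihn =>
      rw [pow_succ, ihn, xone, Finset.sum_mul_sum]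
      refine Finset.sum_congr rfl fun s hs => ?_
      rw [Finset.sum_eq_single_of_mem s hs]
      · rw [smul_mul_smul_comm, hidem s hs, ← pow_succ]
      · intro t ht hne
        rw [smul_mul_smul_comm, horth s hs t ht (fun h => hne h.symm), smul_zero]
  rw [aeval_eq_sum_range]
  calc ∑ i ∈ Finset.range (P.natDegree + 1), P.coeff i • (xone d f)^i
      = ∑ i ∈ Finset.range (P.natDegree + 1), ∑ t ∈ Finset.range (d + 1),
          (P.coeff i * ((d:ℂ) - 2*(t:ℂ))^i) • f t := by
        refine Finset.sum_congr rfl fun i _ => ?_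
        rw [hpow i, Finset.smul_sum]
        exact Finset.sum_congr rfl fun t _ => by rw [smul_smul]
    _ = ∑ t ∈ Finset.range (d + 1), (∑ i ∈ Finset.range (P.natDegree + 1),
          P.coeff i * ((d:ℂ) - 2*(t:ℂ))^i) • f t := by
        rw [Finset.sum_comm]
        exact Finset.sum_congr rfl fun t _ => (Finset.sum_smul).symm
    _ = ∑ t ∈ Finset.range (d + 1), (P.eval ((d:ℂ) - 2*(t:ℂ))) • f t := by
        refine Finset.sum_congr rfl fun t _ => ?_
        rw [eval_eq_sum_range]

end Stmt17B

/-- In the generalized Terwilliger algebra `T_d` of the hypercube `Q_d` (presented as in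
Definition 5.4 of the paper, with idempotent generators `e_i`, `e_i*` and the hypercube
triple product relations, where `x_i = F_i(x_1)` and `x_i* = F_i(x_1*)`), the primary
central idempotent `u_0 = 2^d ∑_i k_i⁻¹ e_i* e_0 e_i*` (with `k_i = C(d, i)`) satisfies
`u_0 e_0 = e_0`, `u_0 e_d = e_d`, `u_0 e_0* = e_0*`, and `u_0 e_d* = e_d*`. -/
theorem stmt17 (d : ℕ) (F : ℕ → Polynomial ℂ)
    (hF0 : F 0 = 1) (hF1 : F 1 = Polynomial.X)
    (hrec : ∀ i, 1 ≤ i → i ≤ d →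
      Polynomial.X * F i = ((i : ℂ) + 1) • F (i + 1) + ((d : ℂ) - (i : ℂ) + 1) • F (i - 1))
    {A : Type*} [Ring A] [Algebra ℂ A] (e es : ℕ → A)
    (hsum : ∑ i ∈ Finset.range (d + 1), e i = 1)
    (hsums : ∑ i ∈ Finset.range (d + 1), es i = 1)
    (hT3 : ∀ h ≤ d, ∀ i ≤ d, ∀ j ≤ d, ¬ memPn d h i j →
      es h * Polynomial.aeval (xone d e) (F i) * es j = 0)
    (hT3s : ∀ h ≤ d, ∀ i ≤ d, ∀ j ≤ d, ¬ memPn d h i j →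
      e h * Polynomial.aeval (xone d es) (F i) * e j = 0)
    (u0 : A)
    (hu0 : u0 = (2 ^ d : ℂ) •
      ∑ i ∈ Finset.range (d + 1), ((d.choose i : ℂ))⁻¹ • (es i * e 0 * es i)) :
    u0 * e 0 = e 0 ∧ u0 * e d = e d ∧ u0 * es 0 = es 0 ∧ u0 * es d = es d := by
  classical
  have h2d : (2^d : ℂ) ≠ 0 := pow_ne_zero _ two_ne_zero
  have hmem : ∀ {s : ℕ}, s ∈ Finset.range (d+1) → s ≤ d :=
    fun {s} hs => Nat.lt_succ_iff.mp (Finset.mem_range.mp hs)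
  have hmem' : ∀ {s : ℕ}, s ≤ d → s ∈ Finset.range (d+1) :=
    fun {s} hs => Finset.mem_range.mpr (by omega)
  have horthes : ∀ s ∈ Finset.range (d+1), ∀ t ∈ Finset.range (d+1), s ≠ t → es s * es t = 0 := by
    intro s hs t ht hne
    have h := hT3 s (hmem hs) 0 (Nat.zero_le d) t (hmem ht)
      (by rintro ⟨h1, -, h3, -, -⟩; omega)
    rwa [hF0, map_one, mul_one] at h
  have horthe : ∀ s ∈ Finset.range (d+1), ∀ t ∈ Finset.range (d+1), s ≠ t → e s * e t = 0 := by
    intro s hs t ht hne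
    have h := hT3s s (hmem hs) 0 (Nat.zero_le d) t (hmem ht)
      (by rintro ⟨h1, -, h3, -, -⟩; omega)
    rwa [hF0, map_one, mul_one] at h
  have hideme := Stmt17B.idem d e hsum horthe
  have hidemes := Stmt17B.idem d es hsums horthes
  have hevF := Stmt17A.evalF d F hF0 hF1 hrec
  have hX : ∀ j, j ≤ d → Polynomial.aeval (xone d e) (F j)
      = ∑ t ∈ Finset.range (d+1), Stmt17A.Kr d j t • e t := by
    intro j hj
    rw [Stmt17B.spectral d e hsum horthe]
    exact Finset.sum_congr rfl fun t ht => by rw [hevF j hj t (hmem ht)]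
  have hXs : ∀ j, j ≤ d → Polynomial.aeval (xone d es) (F j)
      = ∑ t ∈ Finset.range (d+1), Stmt17A.Kr d j t • es t := by
    intro j hj
    rw [Stmt17B.spectral d es hsums horthes]
    exact Finset.sum_congr rfl fun t ht => by rw [hevF j hj t (hmem ht)]
  have hX0 : Polynomial.aeval (xone d e) (F 0) = 1 := by rw [hF0, map_one]
  have hXs0 : Polynomial.aeval (xone d es) (F 0) = 1 := by rw [hF0, map_one]
  have he0 : e 0 = (2^d : ℂ)⁻¹ • ∑ j ∈ Finset.range (d+1),
      Polynomial.aeval (xone d e) (F j) := by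
    have h : ∑ j ∈ Finset.range (d+1), Polynomial.aeval (xone d e) (F j) = (2^d : ℂ) • e 0 := by
      calc ∑ j ∈ Finset.range (d+1), Polynomial.aeval (xone d e) (F j)
          = ∑ j ∈ Finset.range (d+1), ∑ t ∈ Finset.range (d+1), Stmt17A.Kr d j t • e t :=
            Finset.sum_congr rfl fun j hj => hX j (hmem hj)
        _ = ∑ t ∈ Finset.range (d+1), (∑ j ∈ Finset.range (d+1), Stmt17A.Kr d j t) • e t := by
            rw [Finset.sum_comm]
            exact Finset.sum_congr rfl fun t _ => (Finset.sum_smul).symm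
        _ = ∑ t ∈ Finset.range (d+1), (if t = 0 then (2:ℂ)^d else 0) • e t :=
            Finset.sum_congr rfl fun t ht => by rw [Stmt17A.sum_Kr d t (hmem ht)]
        _ = (2^d : ℂ) • e 0 := by
            rw [Finset.sum_eq_single_of_mem 0 (hmem' (Nat.zero_le d))]
            · rw [if_pos rfl]
            · intro t ht hne; rw [if_neg hne, zero_smul]
    rw [h, smul_smul, inv_mul_cancel₀ h2d, one_smul]
  have hinv : ∀ i, i ≤ d → es i = (2^d : ℂ)⁻¹ • ∑ j ∈ Finset.range (d+1),
      Stmt17A.Kr d i j • Polynomial.aeval (xone d es) (F j) := by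
    intro i hi
    have h : ∑ j ∈ Finset.range (d+1), Stmt17A.Kr d i j • Polynomial.aeval (xone d es) (F j)
        = (2^d : ℂ) • es i := by
      calc ∑ j ∈ Finset.range (d+1), Stmt17A.Kr d i j • Polynomial.aeval (xone d es) (F j)
          = ∑ j ∈ Finset.range (d+1), ∑ t ∈ Finset.range (d+1),
              (Stmt17A.Kr d i j * Stmt17A.Kr d j t) • es t := by
            refine Finset.sum_congr rfl fun j hj => ?_
            rw [hXs j (hmem hj), Finset.smul_sum]
            exact Finset.sum_congr rfl fun t _ => by rw [smul_smul]
        _ = ∑ t ∈ Finset.range (d+1),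
              (∑ j ∈ Finset.range (d+1), Stmt17A.Kr d i j * Stmt17A.Kr d j t) • es t := by
            rw [Finset.sum_comm]
            exact Finset.sum_congr rfl fun t _ => (Finset.sum_smul).symm
        _ = ∑ t ∈ Finset.range (d+1), (if i = t then (2:ℂ)^d else 0) • es t :=
            Finset.sum_congr rfl fun t ht => by
              rw [Stmt17A.sum_Kr_mul_Kr d i t hi (hmem ht)]
        _ = (2^d : ℂ) • es i := by
            rw [Finset.sum_eq_single_of_mem i (hmem' hi)]
            · rw [if_pos rfl]
            · intro t ht hne; rw [if_neg (fun h => hne h.symm), zero_smul]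
    rw [h, smul_smul, inv_mul_cancel₀ h2d, one_smul]
  have z1 : ∀ j, 1 ≤ j → j ≤ d → e 0 * Polynomial.aeval (xone d es) (F j) * e 0 = 0 :=
    fun j h1 h2 => hT3s 0 (Nat.zero_le d) j h2 0 (Nat.zero_le d)
      (by rintro ⟨-, b, -, -, -⟩; omega)
  have z3 : ∀ j, j ≤ d → j ≠ d → e 0 * Polynomial.aeval (xone d es) (F j) * e d = 0 :=
    fun j h1 h2 => hT3s 0 (Nat.zero_le d) j h1 d le_rfl
      (by rintro ⟨-, -, c, -, -⟩; omega)
  have z4 : ∀ j, 1 ≤ j → j ≤ d → es 0 * Polynomial.aeval (xone d e) (F j) * es 0 = 0 :=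
    fun j h1 h2 => hT3 0 (Nat.zero_le d) j h2 0 (Nat.zero_le d)
      (by rintro ⟨-, b, -, -, -⟩; omega)
  have z5 : ∀ j, 1 ≤ j → j ≤ d → es d * Polynomial.aeval (xone d e) (F j) * es d = 0 :=
    fun j h1 h2 => hT3 d le_rfl j h2 d le_rfl
      (by rintro ⟨-, -, -, hs, -⟩; omega)
  have sand : ∀ i, i ≤ d → ∀ (a b : ℕ),
      e a * es i * e b = (2^d:ℂ)⁻¹ • ∑ j ∈ Finset.range (d+1),
        Stmt17A.Kr d i j • (e a * Polynomial.aeval (xone d es) (F j) * e b) := by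
    intro i hi a b
    conv_lhs => rw [hinv i hi]
    rw [mul_smul_comm, smul_mul_assoc]
    congr 1
    rw [Finset.mul_sum, Finset.sum_mul]
    exact Finset.sum_congr rfl fun j _ => by
      rw [mul_smul_comm, smul_mul_assoc]
  have s00 : ∀ i, i ≤ d → e 0 * es i * e 0 = ((2^d:ℂ)⁻¹ * (d.choose i : ℂ)) • e 0 := by
    intro i hi
    rw [sand i hi 0 0, Finset.sum_eq_single_of_mem 0 (hmem' (Nat.zero_le d))]
    · rw [hXs0, mul_one, hideme 0 (hmem' (Nat.zero_le d)), Stmt17A.Kr_zero_right, smul_smul]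
    · intro j hj hne
      rw [z1 j (by omega) (hmem hj), smul_zero]
  have s0d : ∀ i, i ≤ d → e 0 * es i * e d
      = ((2^d:ℂ)⁻¹ * ((-1:ℂ)^i * (d.choose i : ℂ)))
        • (e 0 * Polynomial.aeval (xone d es) (F d) * e d) := by
    intro i hi
    rw [sand i hi 0 d, Finset.sum_eq_single_of_mem d (hmem' le_rfl)]
    · rw [Stmt17A.Kr_d_right, smul_smul]
    · intro j hj hne
      rw [z3 j (hmem hj) hne, smul_zero]
  have q0 : es 0 * e 0 * es 0 = (2^d:ℂ)⁻¹ • es 0 := by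
    conv_lhs => rw [he0]
    rw [mul_smul_comm, smul_mul_assoc]
    congr 1
    rw [Finset.mul_sum, Finset.sum_mul,
      Finset.sum_eq_single_of_mem 0 (hmem' (Nat.zero_le d))]
    · rw [hX0, mul_one, hidemes 0 (hmem' (Nat.zero_le d))]
    · intro j hj hne
      exact z4 j (by omega) (hmem hj)
  have qd : es d * e 0 * es d = (2^d:ℂ)⁻¹ • es d := by
    conv_lhs => rw [he0]
    rw [mul_smul_comm, smul_mul_assoc]
    congr 1
    rw [Finset.mul_sum, Finset.sum_mul,
      Finset.sum_eq_single_of_mem 0 (hmem' (Nat.zero_le d))]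
    · rw [hX0, mul_one, hidemes d (hmem' le_rfl)]
    · intro j hj hne
      exact z5 j (by omega) (hmem hj)
  have hXsd : Polynomial.aeval (xone d es) (F d)
      = ∑ t ∈ Finset.range (d+1), ((-1:ℂ)^t) • es t := by
    rw [hXs d le_rfl]
    exact Finset.sum_congr rfl fun t ht => by rw [Stmt17A.Kr_d_left d t (hmem ht)]
  have hXj : ∀ j, j ≤ d →
      Polynomial.aeval (xone d es) (F d) * Polynomial.aeval (xone d e) (F j)
        * Polynomial.aeval (xone d es) (F d)
      = ((-1:ℂ)^j) • Polynomial.aeval (xone d e) (F j) := by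
    intro j hj
    have hfull : ∑ s ∈ Finset.range (d+1), ∑ t ∈ Finset.range (d+1),
        es s * Polynomial.aeval (xone d e) (F j) * es t
          = Polynomial.aeval (xone d e) (F j) := by
      calc ∑ s ∈ Finset.range (d+1), ∑ t ∈ Finset.range (d+1),
            es s * Polynomial.aeval (xone d e) (F j) * es t
          = ∑ s ∈ Finset.range (d+1), es s * Polynomial.aeval (xone d e) (F j) := by
            refine Finset.sum_congr rfl fun s _ => ?_
            rw [← Finset.mul_sum, hsums, mul_one]
        _ = Polynomial.aeval (xone d e) (F j) := by
            rw [← Finset.sum_mul, hsums, one_mul]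
    calc Polynomial.aeval (xone d es) (F d) * Polynomial.aeval (xone d e) (F j)
          * Polynomial.aeval (xone d es) (F d)
        = (∑ s ∈ Finset.range (d+1), ((-1:ℂ)^s) • es s) * Polynomial.aeval (xone d e) (F j)
          * (∑ t ∈ Finset.range (d+1), ((-1:ℂ)^t) • es t) := by rw [hXsd]
      _ = ∑ s ∈ Finset.range (d+1), ∑ t ∈ Finset.range (d+1),
            ((-1:ℂ)^(s+t)) • (es s * Polynomial.aeval (xone d e) (F j) * es t) := by
          rw [Finset.sum_mul, Finset.sum_mul]
          refine Finset.sum_congr rfl fun s _ => ?_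
          rw [Finset.mul_sum]
          refine Finset.sum_congr rfl fun t _ => ?_
          rw [smul_mul_assoc, smul_mul_assoc, mul_smul_comm, smul_smul, pow_add]
      _ = ∑ s ∈ Finset.range (d+1), ∑ t ∈ Finset.range (d+1),
            ((-1:ℂ)^j) • (es s * Polynomial.aeval (xone d e) (F j) * es t) := by
          refine Finset.sum_congr rfl fun s hs => Finset.sum_congr rfl fun t ht => ?_
          by_cases hP : memPn d s j t
          · have heven : Even (s + j + t) := hP.2.2.2.2
            have h1 : ((-1:ℂ))^(s+j+t) = 1 := heven.neg_one_pow
            have h2 : ((-1:ℂ))^(s+t) = (-1:ℂ)^j := by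
              have e1 : ((-1:ℂ))^(s+t) * (-1)^j = 1 := by
                rw [← pow_add, show s+t+j = s+j+t by omega, h1]
              have e2 : ((-1:ℂ))^j * (-1)^j = 1 := by
                rw [← pow_add, ← two_mul, pow_mul]; norm_num
              exact mul_right_cancel₀ (pow_ne_zero j (by norm_num : (-1:ℂ) ≠ 0))
                (e1.trans e2.symm)
            rw [h2]
          · rw [hT3 s (hmem hs) j hj t (hmem ht) hP, smul_zero, smul_zero]
      _ = ((-1:ℂ)^j) • Polynomial.aeval (xone d e) (F j) := by
          simp_rw [← Finset.smul_sum]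
          rw [hfull]
  have hconj : Polynomial.aeval (xone d es) (F d) * e 0 * Polynomial.aeval (xone d es) (F d)
      = e d := by
    conv_lhs => rw [he0]
    rw [mul_smul_comm, smul_mul_assoc, Finset.mul_sum, Finset.sum_mul]
    calc (2^d:ℂ)⁻¹ • ∑ j ∈ Finset.range (d+1),
          Polynomial.aeval (xone d es) (F d) * Polynomial.aeval (xone d e) (F j)
            * Polynomial.aeval (xone d es) (F d)
        = (2^d:ℂ)⁻¹ • ∑ j ∈ Finset.range (d+1),
            ((-1:ℂ)^j) • Polynomial.aeval (xone d e) (F j) := by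
          congr 1
          exact Finset.sum_congr rfl fun j hj => hXj j (hmem hj)
      _ = (2^d:ℂ)⁻¹ • ∑ t ∈ Finset.range (d+1),
            (∑ j ∈ Finset.range (d+1), (-1:ℂ)^j * Stmt17A.Kr d j t) • e t := by
          congr 1
          calc ∑ j ∈ Finset.range (d+1), ((-1:ℂ)^j) • Polynomial.aeval (xone d e) (F j)
              = ∑ j ∈ Finset.range (d+1), ∑ t ∈ Finset.range (d+1),
                  ((-1:ℂ)^j * Stmt17A.Kr d j t) • e t := by
                refine Finset.sum_congr rfl fun j hj => ?_
                rw [hX j (hmem hj), Finset.smul_sum]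
                exact Finset.sum_congr rfl fun t _ => by rw [smul_smul]
            _ = ∑ t ∈ Finset.range (d+1),
                  (∑ j ∈ Finset.range (d+1), (-1:ℂ)^j * Stmt17A.Kr d j t) • e t := by
                rw [Finset.sum_comm]
                exact Finset.sum_congr rfl fun t _ => (Finset.sum_smul).symm
      _ = (2^d:ℂ)⁻¹ • ∑ t ∈ Finset.range (d+1), (if d = t then (2:ℂ)^d else 0) • e t := by
          congr 1
          refine Finset.sum_congr rfl fun t ht => ?_
          congr 1
          calc ∑ j ∈ Finset.range (d+1), (-1:ℂ)^j * Stmt17A.Kr d j t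
              = ∑ j ∈ Finset.range (d+1), Stmt17A.Kr d d j * Stmt17A.Kr d j t :=
                Finset.sum_congr rfl fun j hj => by rw [Stmt17A.Kr_d_left d j (hmem hj)]
            _ = if d = t then (2:ℂ)^d else 0 :=
                Stmt17A.sum_Kr_mul_Kr d d t le_rfl (hmem ht)
      _ = e d := by
          rw [Finset.sum_eq_single_of_mem d (hmem' le_rfl)]
          · rw [if_pos rfl, smul_smul, inv_mul_cancel₀ h2d, one_smul]
          · intro t ht hne; rw [if_neg (fun h => hne h.symm), zero_smul]
  refine ⟨?_, ?_, ?_, ?_⟩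
  · -- u0 * e 0 = e 0
    rw [hu0, smul_mul_assoc, Finset.sum_mul]
    have hterm : ∀ i ∈ Finset.range (d+1),
        ((d.choose i : ℂ))⁻¹ • (es i * e 0 * es i) * e 0
          = (2^d:ℂ)⁻¹ • (es i * e 0) := by
      intro i hi
      have hki : ((d.choose i : ℕ):ℂ) ≠ 0 :=
        Nat.cast_ne_zero.mpr (Nat.choose_pos (hmem hi)).ne'
      rw [smul_mul_assoc,
        show es i * e 0 * es i * e 0 = es i * (e 0 * es i * e 0) by
          rw [mul_assoc, mul_assoc, mul_assoc],
        s00 i (hmem hi), mul_smul_comm, smul_smul]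
      congr 1
      field_simp
    rw [Finset.sum_congr rfl hterm, ← Finset.smul_sum, smul_smul,
      mul_inv_cancel₀ h2d, one_smul, ← Finset.sum_mul, hsums, one_mul]
  · -- u0 * e d = e d
    rw [hu0, smul_mul_assoc, Finset.sum_mul]
    have hterm : ∀ i ∈ Finset.range (d+1),
        ((d.choose i : ℂ))⁻¹ • (es i * e 0 * es i) * e d
          = (2^d:ℂ)⁻¹ • (((-1:ℂ)^i) •
              (es i * (e 0 * Polynomial.aeval (xone d es) (F d) * e d))) := by
      intro i hi
      have hki : ((d.choose i : ℕ):ℂ) ≠ 0 :=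
        Nat.cast_ne_zero.mpr (Nat.choose_pos (hmem hi)).ne'
      rw [smul_mul_assoc,
        show es i * e 0 * es i * e d = es i * (e 0 * es i * e d) by
          rw [mul_assoc, mul_assoc, mul_assoc],
        s0d i (hmem hi), mul_smul_comm, smul_smul, smul_smul]
      congr 1
      field_simp
    rw [Finset.sum_congr rfl hterm, ← Finset.smul_sum, smul_smul,
      mul_inv_cancel₀ h2d, one_smul]
    have hcollect : ∑ i ∈ Finset.range (d+1), ((-1:ℂ)^i) •
        (es i * (e 0 * Polynomial.aeval (xone d es) (F d) * e d))
        = Polynomial.aeval (xone d es) (F d)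
          * (e 0 * Polynomial.aeval (xone d es) (F d) * e d) := by
      rw [hXsd, Finset.sum_mul]
      exact Finset.sum_congr rfl fun i _ => by rw [smul_mul_assoc]
    rw [hcollect,
      show Polynomial.aeval (xone d es) (F d)
          * (e 0 * Polynomial.aeval (xone d es) (F d) * e d)
        = (Polynomial.aeval (xone d es) (F d) * e 0
            * Polynomial.aeval (xone d es) (F d)) * e d by
          rw [mul_assoc, mul_assoc, mul_assoc],
      hconj, hideme d (hmem' le_rfl)]
  · -- u0 * es 0 = es 0
    rw [hu0, smul_mul_assoc, Finset.sum_mul]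
    have hterm : ∀ i ∈ Finset.range (d+1),
        ((d.choose i : ℂ))⁻¹ • (es i * e 0 * es i) * es 0
          = if i = 0 then es 0 * e 0 * es 0 else 0 := by
      intro i hi
      rcases eq_or_ne i 0 with rfl | hne
      · rw [if_pos rfl, Nat.choose_zero_right, Nat.cast_one, inv_one, one_smul,
          mul_assoc (es 0 * e 0) (es 0) (es 0), hidemes 0 (hmem' (Nat.zero_le d))]
      · rw [if_neg hne, smul_mul_assoc,
          mul_assoc (es i * e 0) (es i) (es 0),
          horthes i hi 0 (hmem' (Nat.zero_le d)) hne, mul_zero, smul_zero]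
    rw [Finset.sum_congr rfl hterm, Finset.sum_ite_eq' (Finset.range (d+1)) 0
      (fun _ => es 0 * e 0 * es 0), if_pos (hmem' (Nat.zero_le d)), q0,
      smul_smul, mul_inv_cancel₀ h2d, one_smul]
  · -- u0 * es d = es d
    rw [hu0, smul_mul_assoc, Finset.sum_mul]
    have hterm : ∀ i ∈ Finset.range (d+1),
        ((d.choose i : ℂ))⁻¹ • (es i * e 0 * es i) * es d
          = if i = d then es d * e 0 * es d else 0 := by
      intro i hi
      rcases eq_or_ne i d with rfl | hne
      · rw [if_pos rfl, Nat.choose_self, Nat.cast_one, inv_one, one_smul,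
          mul_assoc (es i * e 0) (es i) (es i), hidemes i (hmem' le_rfl)]
      · rw [if_neg hne, smul_mul_assoc,
          mul_assoc (es i * e 0) (es i) (es d),
          horthes i hi d (hmem' le_rfl) hne, mul_zero, smul_zero]
    rw [Finset.sum_congr rfl hterm, Finset.sum_ite_eq' (Finset.range (d+1)) d
      (fun _ => es d * e 0 * es d), if_pos (hmem' le_rfl), qd,
      smul_smul, mul_inv_cancel₀ h2d, one_smul]
end
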